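/- For the linear scalar case f(w) = cw, one full discrete over-relaxation step S₂ maps the state (w_i, z_i)_{i∈ℤ} so that the quantity y_i := z_i - c w_i satisfies, to leading order, backward propagation: explicitly, if w_i^n = W and y_i^n = Y(x_i) with W constant and Y affine, then y_i^{n+1} = Y(x_i + cΔt). -/

import Mathlib

/-- Discrete shift transport sub-step `T(Δt/4)` on grid data. -/
noncomputable def discreteT (lam : ℝ) : (ℤ → ℝ) × (ℤ → ℝ) → (ℤ → ℝ) × (ℤ → ℝ) :=
  fun p =>
    (fun i => (p.1 (i - 1) + p.1 (i + 1)) / 2 + (p.2 (i - 1) - p.2 (i + 1)) / (2 * lam),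
     fun i => (p.2 (i - 1) + p.2 (i + 1)) / 2 + lam * (p.1 (i - 1) - p.1 (i + 1)) / 2)

/-- Pointwise over-relaxation for the linear flux `f(w) = c w`. -/
def discreteR (c : ℝ) : (ℤ → ℝ) × (ℤ → ℝ) → (ℤ → ℝ) × (ℤ → ℝ) :=
  fun p => (p.1, fun i => 2 * c * p.1 i - p.2 i)

/-- The discrete over-relaxation scheme. -/
noncomputable def discreteS₂ (lam c : ℝ) : (ℤ → ℝ) × (ℤ → ℝ) → (ℤ → ℝ) × (ℤ → ℝ) :=
  discreteT lam ∘ discreteR c ∘ discreteT lam ∘ discreteT lam ∘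
    discreteR c ∘ discreteT lam

/-!
On grid data affine in the index, `discreteT` and `discreteR` act only on intercepts and slopes.
For constant `w` and `z` of slope `δ`, the two reflections flip the slope of `z` twice, the four
transports return the intercept of `w` to its start, and the intercept of `z` gains `4 c δ / λ`;
with `δ = b Δx` this is the shift `b · c Δt` of `Y`.
-/

def affineGrid (p q : ℝ) : ℤ → ℝ := fun i => p + q * i

theorem discreteT_affineGrid (lam α β γ δ : ℝ) :
    discreteT lam (affineGrid α β, affineGrid γ δ) =
      (affineGrid (α - δ / lam) β, affineGrid (γ - lam * β) δ) := by
  ext i <;> simp only [discreteT, affineGrid] <;> push_cast <;> ring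

theorem discreteR_affineGrid (c α β γ δ : ℝ) :
    discreteR c (affineGrid α β, affineGrid γ δ) =
      (affineGrid α β, affineGrid (2 * c * α - γ) (2 * c * β - δ)) := by
  ext i <;> simp only [discreteR, affineGrid]
  ring

theorem discreteS₂_affineGrid_const (lam c W γ δ : ℝ) :
    discreteS₂ lam c (affineGrid W 0, affineGrid γ δ) =
      (affineGrid W 0, affineGrid (γ + 4 * c * δ / lam) δ) := by
  simp only [discreteS₂, Function.comp_apply, discreteT_affineGrid, discreteR_affineGrid]
  congr 2 <;> ring

theorem flux_error_backward_propagation_general (c lam Δx a b W : ℝ) (Δt : ℝ) (hΔt : Δt = 4 * Δx / lam)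
    (Y : ℝ → ℝ) (hY : ∀ x, Y x = a + b * x)
    (w z : ℤ → ℝ)
    (hw : ∀ i : ℤ, w i = W)
    (hz : ∀ i : ℤ, z i = c * W + Y ((i : ℝ) * Δx)) :
    ∀ i : ℤ,
      (discreteS₂ lam c (w, z)).2 i - c * (discreteS₂ lam c (w, z)).1 i =
        Y ((i : ℝ) * Δx + c * Δt) := by
  have hw' : w = affineGrid W 0 := funext fun i => by simp [affineGrid, hw]
  have hz' : z = affineGrid (c * W + a) (b * Δx) := funext fun i => by
    simp only [affineGrid, hz, hY]
    ring
  intro i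
  rw [hw', hz', discreteS₂_affineGrid_const]
  simp only [affineGrid, hY, hΔt]
  ring

theorem flux_error_backward_propagation (c lam Δx a b W : ℝ) (hlam : 0 < lam)
    (hΔx : 0 < Δx) (Δt : ℝ) (hΔt : Δt = 4 * Δx / lam)
    (Y : ℝ → ℝ) (hY : ∀ x, Y x = a + b * x)
    (w z : ℤ → ℝ)
    (hw : ∀ i : ℤ, w i = W)
    (hz : ∀ i : ℤ, z i = c * W + Y ((i : ℝ) * Δx)) :
    ∀ i : ℤ,
      (discreteS₂ lam c (w, z)).2 i - c * (discreteS₂ lam c (w, z)).1 i =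
        Y ((i : ℝ) * Δx + c * Δt) :=
  flux_error_backward_propagation_general c lam Δx a b W Δt hΔt Y hY w z hw hz
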